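/- Counterexample to AGM postulate (T*7): let ι = Fin 4 (in the language enlarged with P). (i) For the theory form with form 0 = p, form 1 = ¬p, form 2 = ¬p, form 3 = (0 < 1) ∧ (0 < 2) (conjunction of the atomic sentences R(c_0, c_1) and R(c_0, c_2)), p is an accepted conclusion: p ∈ lfp(C_form). (ii) For the theory form' identical to form except form' 3 = (0 < 1), p is not an accepted conclusion, and moreover p is not satisfied in some model of lfp(C_{form'}) ∪ {(0 < 2)} ∪ SPO (i.e. p is not a semantic consequence of the belief set expanded with (0 < 2)). -/

import Mathlib

open FirstOrder Language

namespace Brevis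

/-- The base language with a single binary relation symbol `R`. -/
def baseLang : Language where
  Functions := fun _ => Empty
  Relations := fun n => match n with
    | 2 => Unit
    | _ => Empty

/-- The binary relation symbol `R` of `baseLang`. -/
def Rsym : baseLang.Relations 2 := Unit.unit

/-- The base language with a binary relation symbol `R` and one 0-ary relation symbol `P`. -/
def baseLangP : Language where
  Functions := fun _ => Empty
  Relations := fun n => match n with
    | 0 => Unit
    | 2 => Unit
    | _ => Empty

/-- The binary relation symbol `R` of `baseLangP`. -/
def RsymP : baseLangP.Relations 2 := Unit.unit

/-- The 0-ary relation symbol `P` of `baseLangP`. -/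
def Psym : baseLangP.Relations 0 := Unit.unit

/-- The atomic sentence `p` given by the propositional symbol `P`. -/
def pSent (ι : Type) : (baseLangP[[ι]]).Sentence :=
  Relations.formula (Sum.inl Psym) ![]

variable (L₀ : FirstOrder.Language.{0, 0}) (R : L₀.Relations 2) (ι : Type) [Fintype ι]

/-- The atomic sentence `d < d'`, i.e. `R (c_d) (c_d')`. -/
def ltSent (d d' : ι) : (L₀[[ι]]).Sentence :=
  Relations.boundedFormula₂ (Sum.inl R) (L₀.con d).term (L₀.con d').term

/-- The theory `SPO` asserting that `R` is a strict partial order (irreflexive and transitive). -/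
def spo : (L₀[[ι]]).Theory :=
  {Relations.irreflexive (Sum.inl R), Relations.transitive (Sum.inl R)}

/-- A set of sentences is consistent iff together with `SPO` it is satisfiable. -/
def Consistent (S : (L₀[[ι]]).Theory) : Prop :=
  Theory.IsSatisfiable (S ∪ spo L₀ R ι)

open scoped Classical in
/-- The extension base `B(e)` determined by the linear order `e` on the names. -/
noncomputable def base (e : LinearOrder ι) (form : ι → (L₀[[ι]]).Sentence) :
    (L₀[[ι]]).Theory :=
  letI := e
  (Finset.univ.sort (· ≤ · : ι → ι → Prop)).foldl
    (fun B d => if Consistent L₀ R ι (B ∪ {form d}) then B ∪ {form d} else B) ∅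

/-- The deductive closure (modulo `SPO`) of a set of sentences:
all sentences satisfied in every model of `S ∪ SPO`. -/
def closure (S : (L₀[[ι]]).Theory) : Set (L₀[[ι]]).Sentence :=
  {φ | (S ∪ spo L₀ R ι) ⊨ᵇ φ}

/-- The extension `E(e)` generated by the linear order `e`. -/
noncomputable def extension (e : LinearOrder ι) (form : ι → (L₀[[ι]]).Sentence) :
    Set (L₀[[ι]]).Sentence :=
  closure L₀ R ι (base L₀ R ι e form)

/-- A strict partial order `p` on the names is compatible with `S` iff
`S ∪ SPO ∪ {d < d' | p d d'} ∪ {¬ (d < d') | ¬ p d d'}` is satisfiable. -/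
def Compatible (p : ι → ι → Prop) (S : (L₀[[ι]]).Theory) : Prop :=
  Theory.IsSatisfiable
    (S ∪ spo L₀ R ι ∪ {φ | ∃ d d', p d d' ∧ φ = ltSent L₀ R ι d d'} ∪
      {φ | ∃ d d', ¬ p d d' ∧ φ = ∼(ltSent L₀ R ι d d')})

/-- `Exts form S`: the set of extensions `E(e)` where `e` is a linear order extending some
strict partial order compatible with `S`. -/
def Exts (form : ι → (L₀[[ι]]).Sentence) (S : (L₀[[ι]]).Theory) :
    Set (Set (L₀[[ι]]).Sentence) :=
  {E | ∃ (e : LinearOrder ι) (p : ι → ι → Prop), IsStrictOrder ι p ∧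
    Compatible L₀ R ι p S ∧ (∀ d d', p d d' → e.lt d d') ∧ E = extension L₀ R ι e form}

/-- The operator `C`. -/
def C (form : ι → (L₀[[ι]]).Sentence) (S : (L₀[[ι]]).Theory) : (L₀[[ι]]).Theory :=
  ⋂₀ Exts L₀ R ι form S

/-- The least fixed point of `C` (Knaster–Tarski): the set of accepted conclusions. -/
def lfpC (form : ι → (L₀[[ι]]).Sentence) : (L₀[[ι]]).Theory :=
  sInf {S | C L₀ R ι form S ⊆ S}

end Brevis

/-!
Under `form₁` the conjunction `(0 < 1) ∧ (0 < 2)` is kept by every linear order, being consistent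
with whichever of `p`, `¬p` came first. So every prefixed point of `C` contains `0 < 1` and
`0 < 2`, every compatible strict order puts `0` below `1` and `2`, and then every admissible linear
order keeps `p`, since only the consistent conjunction can precede it.

Under `form₂` the consequences `Cn{0 < 1}` of `0 < 1` form a prefixed point of `C`: the order
`{0 < 1}` is compatible with it and is extended both by `0 ≺ 1 ≺ 2 ≺ 3`, with base `{p, 0 < 1}`,
and by `2 ≺ 0 ≺ 1 ≺ 3`, with base `{¬p, 0 < 1}`, and these two extensions meet inside
`Cn{0 < 1}`. Hence `lfp C ⊆ Cn{0 < 1}`, and the model with `R = {(0,1), (0,2), (0,3)}` in which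
`p` is false satisfies `lfp C ∪ {0 < 2} ∪ SPO`.
-/

theorem List.exists_eq_append_cons_of_pairwise_le {α : Type*} [PartialOrder α]
    {l : List α} (hl : l.Pairwise (· ≤ ·)) (hnd : l.Nodup) {d : α} (hd : d ∈ l) :
    ∃ a b, l = a ++ d :: b ∧ ∀ x ∈ a, x < d := by
  obtain ⟨a, b, rfl⟩ := List.append_of_mem hd
  refine ⟨a, b, rfl, fun x hx => lt_of_le_of_ne ?_ ?_⟩
  · exact (List.pairwise_append.1 hl).2.2 x hx d List.mem_cons_self
  · exact (List.nodup_append.1 hnd).2.2 x hx d List.mem_cons_self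

namespace Brevis

section Greedy

variable {L₀ : FirstOrder.Language.{0, 0}} {R : L₀.Relations 2} {ι : Type}

theorem Consistent.not_notMem_of_mem {S : (L₀[[ι]]).Theory} {φ : (L₀[[ι]]).Sentence}
    (hS : Consistent L₀ R ι S) (hφ : φ ∈ S) : ∼φ ∉ S := fun hnφ => by
  obtain ⟨M⟩ := hS
  exact (Sentence.realize_not M).1 (Theory.realize_sentence_of_mem (S ∪ spo L₀ R ι) (Or.inl hnφ))
    (Theory.realize_sentence_of_mem (S ∪ spo L₀ R ι) (Or.inl hφ))

theorem Consistent.subset_insert_of_mem {B T : (L₀[[ι]]).Theory} {φ : (L₀[[ι]]).Sentence}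
    (hB : Consistent L₀ R ι B) (hsub : B ⊆ insert φ (insert (∼φ) T)) (hφ : φ ∈ B) :
    B ⊆ insert φ T := by
  intro ψ hψ
  rcases hsub hψ with rfl | rfl | h
  · exact Or.inl rfl
  · exact absurd hψ (hB.not_notMem_of_mem hφ)
  · exact Or.inr h

theorem Consistent.subset_insert_not_of_mem {B T : (L₀[[ι]]).Theory} {φ : (L₀[[ι]]).Sentence}
    (hB : Consistent L₀ R ι B) (hsub : B ⊆ insert φ (insert (∼φ) T)) (hφ : ∼φ ∈ B) :
    B ⊆ insert (∼φ) T := by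
  intro ψ hψ
  rcases hsub hψ with rfl | rfl | h
  · exact absurd hφ (hB.not_notMem_of_mem hψ)
  · exact Or.inl rfl
  · exact Or.inr h

variable (L₀ R ι) in
open scoped Classical in
/-- One step `B_{i-1} ↦ B_i` of the construction of `base`. -/
noncomputable def greedyStep (form : ι → (L₀[[ι]]).Sentence) (B : (L₀[[ι]]).Theory) (d : ι) :
    (L₀[[ι]]).Theory :=
  if Consistent L₀ R ι (B ∪ {form d}) then B ∪ {form d} else B

variable {form : ι → (L₀[[ι]]).Sentence}

theorem subset_greedyStep (B : (L₀[[ι]]).Theory) (d : ι) : B ⊆ greedyStep L₀ R ι form B d := by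
  unfold greedyStep
  split_ifs
  exacts [Set.subset_union_left, subset_rfl]

theorem greedyStep_subset (B : (L₀[[ι]]).Theory) (d : ι) :
    greedyStep L₀ R ι form B d ⊆ B ∪ {form d} := by
  unfold greedyStep
  split_ifs
  exacts [subset_rfl, Set.subset_union_left]

theorem consistent_greedyStep {B : (L₀[[ι]]).Theory} (hB : Consistent L₀ R ι B) (d : ι) :
    Consistent L₀ R ι (greedyStep L₀ R ι form B d) := by
  unfold greedyStep
  split_ifs with h
  exacts [h, hB]

theorem subset_foldl_greedyStep (l : List ι) (B : (L₀[[ι]]).Theory) :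
    B ⊆ l.foldl (greedyStep L₀ R ι form) B := by
  induction l generalizing B with
  | nil => exact subset_rfl
  | cons d l ih => exact (subset_greedyStep B d).trans (ih _)

theorem foldl_greedyStep_subset (l : List ι) (B : (L₀[[ι]]).Theory) :
    l.foldl (greedyStep L₀ R ι form) B ⊆ B ∪ form '' {x | x ∈ l} := by
  induction l generalizing B with
  | nil => simp
  | cons d l ih =>
    intro φ hφ
    rcases ih _ hφ with hφ | ⟨x, hx, rfl⟩
    · rcases greedyStep_subset B d hφ with hφ | rfl
      · exact Or.inl hφ
      · exact Or.inr ⟨d, List.mem_cons_self, rfl⟩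
    · exact Or.inr ⟨x, List.mem_cons_of_mem d hx, rfl⟩

theorem consistent_foldl_greedyStep {B : (L₀[[ι]]).Theory} (hB : Consistent L₀ R ι B)
    (l : List ι) : Consistent L₀ R ι (l.foldl (greedyStep L₀ R ι form) B) := by
  induction l generalizing B with
  | nil => exact hB
  | cons d l ih => exact ih (consistent_greedyStep hB d)

theorem mem_foldl_greedyStep {a b : List ι} {d : ι} {B : (L₀[[ι]]).Theory}
    (h : Consistent L₀ R ι (a.foldl (greedyStep L₀ R ι form) B ∪ {form d})) :
    form d ∈ (a ++ d :: b).foldl (greedyStep L₀ R ι form) B := by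
  rw [List.foldl_append, List.foldl_cons]
  refine subset_foldl_greedyStep b _ ?_
  rw [greedyStep, if_pos h]
  exact Or.inr rfl

end Greedy

section Base

variable {L₀ : FirstOrder.Language.{0, 0}} {R : L₀.Relations 2} {ι : Type} [Fintype ι]
  {form : ι → (L₀[[ι]]).Sentence}

theorem base_eq_foldl (e : LinearOrder ι) (form : ι → (L₀[[ι]]).Sentence) :
    base L₀ R ι e form =
      (letI := e; Finset.univ.sort (· ≤ ·)).foldl (greedyStep L₀ R ι form) ∅ :=
  rfl

theorem base_subset_range (e : LinearOrder ι) : base L₀ R ι e form ⊆ Set.range form := by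
  rw [base_eq_foldl]
  refine (foldl_greedyStep_subset _ ∅).trans ?_
  rintro _ (h | ⟨x, -, rfl⟩)
  exacts [h.elim, ⟨x, rfl⟩]

theorem consistent_base (h₀ : Consistent L₀ R ι ∅) (e : LinearOrder ι) :
    Consistent L₀ R ι (base L₀ R ι e form) :=
  consistent_foldl_greedyStep h₀ _

theorem form_mem_base (h₀ : Consistent L₀ R ι ∅) (e : LinearOrder ι) (d : ι)
    (h : ∀ B ⊆ form '' {x | e.lt x d}, Consistent L₀ R ι B →
      Consistent L₀ R ι (B ∪ {form d})) :
    form d ∈ base L₀ R ι e form := by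
  let _ := e
  obtain ⟨a, b, hab, ha⟩ := List.exists_eq_append_cons_of_pairwise_le
    (Finset.pairwise_sort Finset.univ (· ≤ ·)) (Finset.sort_nodup _ _)
    ((Finset.mem_sort _).2 (Finset.mem_univ d))
  rw [base_eq_foldl, hab]
  refine mem_foldl_greedyStep (h _ ?_ (consistent_foldl_greedyStep h₀ a))
  refine (foldl_greedyStep_subset a ∅).trans ?_
  rintro _ (h | ⟨x, hx, rfl⟩)
  exacts [h.elim, ⟨x, ha x hx, rfl⟩]

theorem form_mem_base_of_forall_not_lt (h₀ : Consistent L₀ R ι ∅) (e : LinearOrder ι) {d : ι}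
    (hd : ∀ x, ¬ e.lt x d) (h : Consistent L₀ R ι {form d}) : form d ∈ base L₀ R ι e form := by
  refine form_mem_base h₀ e d fun B hB _ => ?_
  obtain rfl : B = ∅ := Set.subset_eq_empty hB (by simp [hd])
  rwa [Set.empty_union]

end Base

section Closure

variable {L₀ : FirstOrder.Language.{0, 0}} {R : L₀.Relations 2} {ι : Type}
  {S T : (L₀[[ι]]).Theory} {φ ψ : (L₀[[ι]]).Sentence}

theorem subset_closure : S ⊆ closure L₀ R ι S :=
  fun _ hφ => Theory.models_sentence_of_mem (Or.inl hφ)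

theorem closure_mono (h : S ⊆ T) : closure L₀ R ι S ⊆ closure L₀ R ι T := fun _ hφ =>
  Theory.models_sentence_iff.2 fun M =>
    have : (M : Type) ⊨ S ∪ spo L₀ R ι :=
      Theory.Model.mono M.is_model (Set.union_subset_union_left _ h)
    hφ.realize_sentence M

theorem inf_mem_closure_iff :
    φ ⊓ ψ ∈ closure L₀ R ι S ↔ φ ∈ closure L₀ R ι S ∧ ψ ∈ closure L₀ R ι S := by
  simp only [closure, Set.mem_ofPred_eq, Theory.models_sentence_iff, Sentence.realize_inf,
    forall_and]

theorem model_closure {M : Type} [Nonempty M] [(L₀[[ι]]).Structure M]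
    (h : M ⊨ S ∪ spo L₀ R ι) : M ⊨ closure L₀ R ι S :=
  (Theory.model_iff _).2 fun _ hφ => hφ.realize_sentence M

theorem closure_insert_inter_closure_insert_not :
    closure L₀ R ι (insert φ S) ∩ closure L₀ R ι (insert (∼φ) S) ⊆ closure L₀ R ι S := by
  rintro ψ ⟨hpos, hneg⟩
  refine Theory.models_sentence_iff.2 fun M => ?_
  have hS : (M : Type) ⊨ S ∪ spo L₀ R ι := M.is_model
  rw [Theory.model_union_iff] at hS
  by_cases hφ : (M : Type) ⊨ φ
  · have : (M : Type) ⊨ insert φ S ∪ spo L₀ R ι :=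
      Theory.model_union_iff.2 ⟨Theory.model_insert_iff.2 ⟨hφ, hS.1⟩, hS.2⟩
    exact hpos.realize_sentence M
  · have : (M : Type) ⊨ insert (∼φ) S ∪ spo L₀ R ι :=
      Theory.model_union_iff.2
        ⟨Theory.model_insert_iff.2 ⟨(Sentence.realize_not _).2 hφ, hS.1⟩, hS.2⟩
    exact hneg.realize_sentence M

theorem Compatible.rel_of_ltSent_mem {q : ι → ι → Prop} (hq : Compatible L₀ R ι q S) {d d' : ι}
    (h : ltSent L₀ R ι d d' ∈ S) : q d d' := by
  by_contra hn
  obtain ⟨M⟩ := hq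
  exact (Sentence.realize_not M).1 (M.is_model.realize_of_mem _ (Or.inr ⟨d, d', hn, rfl⟩))
    (M.is_model.realize_of_mem _ (Or.inl (Or.inl (Or.inl h))))

end Closure

section Operator

variable {L₀ : FirstOrder.Language.{0, 0}} {R : L₀.Relations 2} {ι : Type} [Fintype ι]
  {form : ι → (L₀[[ι]]).Sentence} {S : (L₀[[ι]]).Theory}

theorem mem_C {φ : (L₀[[ι]]).Sentence}
    (h : ∀ (e : LinearOrder ι) (q : ι → ι → Prop), IsStrictOrder ι q → Compatible L₀ R ι q S →
      (∀ d d', q d d' → e.lt d d') → φ ∈ extension L₀ R ι e form) :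
    φ ∈ C L₀ R ι form S := by
  rintro _ ⟨e, q, hq, hc, he, rfl⟩
  exact h e q hq hc he

theorem C_subset_extension {e : LinearOrder ι} {q : ι → ι → Prop} (hq : IsStrictOrder ι q)
    (hc : Compatible L₀ R ι q S) (he : ∀ d d', q d d' → e.lt d d') :
    C L₀ R ι form S ⊆ extension L₀ R ι e form :=
  Set.sInter_subset_of_mem ⟨e, q, hq, hc, he, rfl⟩

theorem lfpC_subset (h : C L₀ R ι form S ⊆ S) : lfpC L₀ R ι form ⊆ S :=
  sInf_le h

theorem mem_lfpC {φ : (L₀[[ι]]).Sentence} (h : ∀ S, C L₀ R ι form S ⊆ S → φ ∈ S) :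
    φ ∈ lfpC L₀ R ι form :=
  Set.mem_sInter.2 h

end Operator

section HerbrandModel

variable {ι : Type} {r : ι → ι → Prop} {P : Prop}

set_option linter.unusedVariables false in
/-- The model on the names themselves: `c_d` denotes `d`, `R` is `r` and `P` holds iff `P`. -/
def HerbrandModel (ι : Type) (r : ι → ι → Prop) (P : Prop) : Type := ι

instance [h : Nonempty ι] : Nonempty (HerbrandModel ι r P) := h

instance : baseLangP.Structure (HerbrandModel ι r P) where
  funMap f _ := Empty.elim f
  RelMap {n} s v := match n, s with
    | 0, _ => P
    | 1, s => Empty.elim s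
    | 2, _ => r (v 0) (v 1)
    | _ + 3, s => Empty.elim s

instance : (baseLangP[[ι]]).Structure (HerbrandModel ι r P) :=
  @Language.sumStructure _ _ _ _ (constantsOn.structure (id : ι → HerbrandModel ι r P))

theorem HerbrandModel.realize_pSent : HerbrandModel ι r P ⊨ pSent ι ↔ P :=
  Iff.rfl

theorem HerbrandModel.realize_ltSent {d d' : ι} :
    HerbrandModel ι r P ⊨ ltSent baseLangP RsymP ι d d' ↔ r d d' :=
  Iff.rfl

theorem HerbrandModel.model_spo (hr : IsStrictOrder ι r) :
    HerbrandModel ι r P ⊨ spo baseLangP RsymP ι := by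
  simp only [spo, Theory.model_insert_iff, Theory.model_singleton_iff]
  exact ⟨Relations.realize_irreflexive.2 ⟨hr.irrefl⟩,
    Relations.realize_transitive.2 ⟨fun _ _ _ => hr.trans _ _ _⟩⟩

theorem HerbrandModel.consistent [Nonempty ι] (hr : IsStrictOrder ι r)
    {S : (baseLangP[[ι]]).Theory} (h : HerbrandModel ι r P ⊨ S) :
    Consistent baseLangP RsymP ι S :=
  have := h.union (model_spo hr)
  Theory.Model.isSatisfiable (HerbrandModel ι r P)

theorem HerbrandModel.compatible [Nonempty ι] (hr : IsStrictOrder ι r)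
    {S : (baseLangP[[ι]]).Theory} (h : HerbrandModel ι r P ⊨ S) :
    Compatible baseLangP RsymP ι r S := by
  refine @Theory.Model.isSatisfiable _ _ (HerbrandModel ι r P) _ _ ⟨?_⟩
  rintro φ (((hφ | hφ) | ⟨d, d', hdd', rfl⟩) | ⟨d, d', hdd', rfl⟩)
  · exact h.realize_of_mem φ hφ
  · exact (model_spo hr).realize_of_mem φ hφ
  · exact realize_ltSent.2 hdd'
  · exact (Sentence.realize_not _).2 (mt realize_ltSent.1 hdd')

theorem HerbrandModel.model_closure_ltSent (hr : IsStrictOrder ι r) {d d' : ι} (h : r d d') :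
    HerbrandModel ι r P ⊨ closure baseLangP RsymP ι {ltSent baseLangP RsymP ι d d'} :=
  have : Nonempty ι := ⟨d⟩
  model_closure (Theory.model_union_iff.2 ⟨Theory.model_singleton_iff.2 h, model_spo hr⟩)

theorem HerbrandModel.realize_of_mem_of_consistent {B : (baseLangP[[ι]]).Theory}
    (hB : Consistent baseLangP RsymP ι B) {ψ : (baseLangP[[ι]]).Sentence} (hψ : ψ ∈ B)
    (hlit : ψ = pSent ι ∨ ψ = ∼(pSent ι)) : HerbrandModel ι r (pSent ι ∈ B) ⊨ ψ := by
  rcases hlit with rfl | rfl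
  · exact hψ
  · exact (Sentence.realize_not _).2 fun hp => hB.not_notMem_of_mem hp hψ

end HerbrandModel

section Counterexample

local notation "p₄" => pSent (Fin 4)
local notation "lt₄" => ltSent baseLangP RsymP (Fin 4)

def form₁ : Fin 4 → (baseLangP[[Fin 4]]).Sentence := ![p₄, ∼p₄, ∼p₄, lt₄ 0 1 ⊓ lt₄ 0 2]

def form₂ : Fin 4 → (baseLangP[[Fin 4]]).Sentence := ![p₄, ∼p₄, ∼p₄, lt₄ 0 1]

theorem isStrictOrder_zero_lt_ne_zero : IsStrictOrder (Fin 4) fun a b => a = 0 ∧ b ≠ 0 where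
  irrefl _ h := h.2 h.1
  trans _ _ _ hab hbc := ⟨hab.1, fun _ => hab.2 hbc.1⟩

theorem isStrictOrder_zero_lt_one : IsStrictOrder (Fin 4) fun a b => a = 0 ∧ b = 1 where
  irrefl _ h := absurd (h.1.symm.trans h.2) (by decide)
  trans _ _ _ hab hbc := absurd (hab.2.symm.trans hbc.1) (by decide)

theorem consistent_empty : Consistent baseLangP RsymP (Fin 4) ∅ :=
  HerbrandModel.consistent (P := True) isStrictOrder_zero_lt_one inferInstance

theorem HerbrandModel.realize_form₁_three {P : Prop} :
    HerbrandModel (Fin 4) (fun a b => a = 0 ∧ b ≠ 0) P ⊨ form₁ 3 :=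
  (Sentence.realize_inf _).2
    ⟨HerbrandModel.realize_ltSent.2 ⟨rfl, by decide⟩,
      HerbrandModel.realize_ltSent.2 ⟨rfl, by decide⟩⟩

theorem form₁_three_mem_base (e : LinearOrder (Fin 4)) :
    form₁ 3 ∈ base baseLangP RsymP (Fin 4) e form₁ := by
  refine form_mem_base consistent_empty e 3 fun B hB hcons => ?_
  refine HerbrandModel.consistent (P := p₄ ∈ B) isStrictOrder_zero_lt_ne_zero ⟨fun ψ hψ => ?_⟩
  rcases hψ with hψ | rfl
  · obtain ⟨i, -, rfl⟩ := hB hψ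
    fin_cases i
    · exact HerbrandModel.realize_of_mem_of_consistent hcons hψ (Or.inl rfl)
    · exact HerbrandModel.realize_of_mem_of_consistent hcons hψ (Or.inr rfl)
    · exact HerbrandModel.realize_of_mem_of_consistent hcons hψ (Or.inr rfl)
    · exact HerbrandModel.realize_form₁_three
  · exact HerbrandModel.realize_form₁_three

theorem form₁_zero_mem_base (e : LinearOrder (Fin 4)) (h01 : e.lt 0 1) (h02 : e.lt 0 2) :
    form₁ 0 ∈ base baseLangP RsymP (Fin 4) e form₁ := by
  refine form_mem_base consistent_empty e 0 fun B hB _ => ?_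
  have hB3 : B ⊆ {form₁ 3} := by
    intro ψ hψ
    obtain ⟨x, hx, rfl⟩ := hB hψ
    fin_cases x
    · exact absurd hx (@lt_irrefl _ e.toPreorder 0)
    · exact absurd hx (@lt_asymm _ e.toPreorder _ _ h01)
    · exact absurd hx (@lt_asymm _ e.toPreorder _ _ h02)
    · rfl
  refine HerbrandModel.consistent (P := True) isStrictOrder_zero_lt_ne_zero ⟨fun ψ hψ => ?_⟩
  rcases hψ with hψ | rfl
  · rw [hB3 hψ]
    exact HerbrandModel.realize_form₁_three
  · exact trivial

theorem pSent_mem_lfpC_form₁ : p₄ ∈ lfpC baseLangP RsymP (Fin 4) form₁ := by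
  have hconj (e : LinearOrder (Fin 4)) :
      lt₄ 0 1 ∈ extension baseLangP RsymP (Fin 4) e form₁ ∧
        lt₄ 0 2 ∈ extension baseLangP RsymP (Fin 4) e form₁ :=
    inf_mem_closure_iff.1 (subset_closure (form₁_three_mem_base e))
  refine mem_lfpC fun S hS => hS (mem_C fun e q _ hq he => ?_)
  have h01 : lt₄ 0 1 ∈ S := hS (mem_C fun e _ _ _ _ => (hconj e).1)
  have h02 : lt₄ 0 2 ∈ S := hS (mem_C fun e _ _ _ _ => (hconj e).2)
  exact subset_closure <| form₁_zero_mem_base e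
    (he _ _ (hq.rel_of_ltSent_mem h01)) (he _ _ (hq.rel_of_ltSent_mem h02))

theorem range_form₂ : Set.range form₂ ⊆ {p₄, ∼p₄, lt₄ 0 1} := by
  rintro _ ⟨i, rfl⟩
  fin_cases i <;> simp [form₂]

/-- The order `2 ≺ 0 ≺ 1 ≺ 3`. -/
abbrev order₂ : LinearOrder (Fin 4) :=
  LinearOrder.lift' (![1, 2, 0, 3] : Fin 4 → ℕ) (by decide)

theorem base_form₂_subset : base baseLangP RsymP (Fin 4) inferInstance form₂ ⊆ {p₄, lt₄ 0 1} := by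
  refine (consistent_base consistent_empty _).subset_insert_of_mem
    ((base_subset_range _).trans range_form₂) ?_
  refine form_mem_base_of_forall_not_lt consistent_empty _ (d := 0) Fin.not_lt_zero ?_
  exact HerbrandModel.consistent (P := True) isStrictOrder_zero_lt_one
    (Theory.model_singleton_iff.2 trivial)

theorem base_order₂_form₂_subset : base baseLangP RsymP (Fin 4) order₂ form₂ ⊆ {∼p₄, lt₄ 0 1} := by
  refine (consistent_base consistent_empty _).subset_insert_not_of_mem
    ((base_subset_range _).trans range_form₂) ?_
  refine form_mem_base_of_forall_not_lt consistent_empty _ (d := 2)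
    (fun _ => Nat.not_lt_zero _) ?_
  exact HerbrandModel.consistent (P := False) isStrictOrder_zero_lt_one
    (Theory.model_singleton_iff.2 ((Sentence.realize_not _).2 id))

theorem C_form₂_subset :
    C baseLangP RsymP (Fin 4) form₂ (closure baseLangP RsymP (Fin 4) {lt₄ 0 1}) ⊆
      closure baseLangP RsymP (Fin 4) {lt₄ 0 1} := by
  have hc := HerbrandModel.compatible (P := False) isStrictOrder_zero_lt_one
    (HerbrandModel.model_closure_ltSent isStrictOrder_zero_lt_one ⟨rfl, rfl⟩)
  have h₁ := C_subset_extension (form := form₂) (e := inferInstance) isStrictOrder_zero_lt_one hc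
    (by rintro _ _ ⟨rfl, rfl⟩; exact (by decide : (0 : Fin 4) < 1))
  have h₂ := C_subset_extension (form := form₂) (e := order₂) isStrictOrder_zero_lt_one hc
    (by rintro _ _ ⟨rfl, rfl⟩; exact Nat.one_lt_two)
  exact (Set.subset_inter h₁ h₂).trans <|
    (Set.inter_subset_inter (closure_mono base_form₂_subset)
      (closure_mono base_order₂_form₂_subset)).trans closure_insert_inter_closure_insert_not

theorem lfpC_form₂_union_not_models_pSent :
    ¬ ((lfpC baseLangP RsymP (Fin 4) form₂ ∪ {lt₄ 0 2} ∪ spo baseLangP RsymP (Fin 4)) ⊨ᵇ p₄) := by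
  intro h
  have : HerbrandModel (Fin 4) (fun a b => a = 0 ∧ b ≠ 0) False ⊨
      lfpC baseLangP RsymP (Fin 4) form₂ ∪ {lt₄ 0 2} ∪ spo baseLangP RsymP (Fin 4) :=
    Theory.model_union_iff.2 ⟨Theory.model_union_iff.2
      ⟨(HerbrandModel.model_closure_ltSent isStrictOrder_zero_lt_ne_zero ⟨rfl, by decide⟩).mono
        (lfpC_subset C_form₂_subset),
        Theory.model_singleton_iff.2 (HerbrandModel.realize_ltSent.2 ⟨rfl, by decide⟩)⟩,
      HerbrandModel.model_spo isStrictOrder_zero_lt_ne_zero⟩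
  exact HerbrandModel.realize_pSent.1
    (h.realize_sentence (HerbrandModel (Fin 4) (fun a b => a = 0 ∧ b ≠ 0) False))

end Counterexample

/-- Counterexample to (T*7): revising with `(0 < 1) ∧ (0 < 2)` makes `p` accepted, but
revising with `(0 < 1)` and then expanding with `(0 < 2)` does not yield `p`. -/
theorem counterexample_T7 :
    pSent (Fin 4) ∈ lfpC baseLangP RsymP (Fin 4)
        ![pSent (Fin 4), ∼(pSent (Fin 4)), ∼(pSent (Fin 4)),
          ltSent baseLangP RsymP (Fin 4) 0 1 ⊓ ltSent baseLangP RsymP (Fin 4) 0 2] ∧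
    pSent (Fin 4) ∉ lfpC baseLangP RsymP (Fin 4)
        ![pSent (Fin 4), ∼(pSent (Fin 4)), ∼(pSent (Fin 4)),
          ltSent baseLangP RsymP (Fin 4) 0 1] ∧
    ¬ ((lfpC baseLangP RsymP (Fin 4)
          ![pSent (Fin 4), ∼(pSent (Fin 4)), ∼(pSent (Fin 4)),
            ltSent baseLangP RsymP (Fin 4) 0 1] ∪
        {ltSent baseLangP RsymP (Fin 4) 0 2} ∪ spo baseLangP RsymP (Fin 4)) ⊨ᵇ
        pSent (Fin 4)) :=
  ⟨pSent_mem_lfpC_form₁,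
    fun h => lfpC_form₂_union_not_models_pSent (Theory.models_sentence_of_mem (Or.inl (Or.inl h))),
    lfpC_form₂_union_not_models_pSent⟩

end Brevis
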